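/- Let A ⊂ L^∞ be a norm-closed conic acceptance set and S an eligible asset. Then R_{A,S}(X) < 1 for every X = (X_0, X_T) with X_0 > 0 and X_T ∉ A if and only if S_T lies in the interior of A. -/

import Mathlib

set_option maxHeartbeats 1000000
set_option synthInstance.maxHeartbeats 1000000

open MeasureTheory

/-- The set of percentages making the combined position acceptable. -/
def IRset {Ω : Type*} [MeasurableSpace Ω] {μ : Measure Ω}
    (A : Set (Lp ℝ ⊤ μ)) (S0 X0 : ℝ) (ST XT : Lp ℝ ⊤ μ) : Set ℝ :=
  {l : ℝ | l ∈ Set.Icc (0 : ℝ) 1 ∧ (1 - l) • XT + l • ((X0 / S0) • ST) ∈ A}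

/-- The intrinsic risk measure. -/
noncomputable def IR {Ω : Type*} [MeasurableSpace Ω] {μ : Measure Ω}
    (A : Set (Lp ℝ ⊤ μ)) (S0 X0 : ℝ) (ST XT : Lp ℝ ⊤ μ) : ℝ :=
  sInf (IRset A S0 X0 ST XT)

lemma ae_norm_le_norm_Linfty {Ω : Type*} [MeasurableSpace Ω] {μ : Measure Ω} (f : Lp ℝ ⊤ μ) :
    ∀ᵐ x ∂μ, ‖f x‖ ≤ ‖f‖ := by
  have h := ae_le_eLpNormEssSup (f := (f : Ω → ℝ)) (μ := μ)
  filter_upwards [h] with x hx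
  rw [eLpNorm_exponent_top.symm] at hx
  have hfin : eLpNorm f ⊤ μ ≠ ⊤ := Lp.eLpNorm_ne_top f
  have := ENNReal.toReal_mono hfin hx
  simpa [Lp.norm_def] using this

/-- `0` belongs to a nonempty closed cone. -/
lemma zero_mem_closed_cone {Ω : Type*} [MeasurableSpace Ω] {μ : Measure Ω}
    {A : Set (Lp ℝ ⊤ μ)} (hne : A.Nonempty) (hclosed : IsClosed A)
    (hcone : ∀ Z ∈ A, ∀ c : ℝ, 0 < c → c • Z ∈ A) : (0 : Lp ℝ ⊤ μ) ∈ A := by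
  obtain ⟨Z, hZ⟩ := hne
  have htend : Filter.Tendsto (fun n : ℕ => (1 / (n : ℝ)) • Z) Filter.atTop (nhds 0) := by
    have := (tendsto_one_div_atTop_nhds_zero_nat : Filter.Tendsto (fun n : ℕ => 1 / (n : ℝ)) Filter.atTop (nhds 0)).smul_const Z
    simpa using this
  refine hclosed.mem_of_tendsto htend ?_
  filter_upwards [Filter.eventually_ge_atTop 1] with n hn
  exact hcone Z hZ _ (by positivity)

theorem stmt11 {Ω : Type*} [MeasurableSpace Ω] (μ : Measure Ω) [IsProbabilityMeasure μ]
    (A : Set (Lp ℝ ⊤ μ)) (hne : A.Nonempty) (hproper : A ≠ Set.univ)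
    (hmono : ∀ X ∈ A, ∀ Y : Lp ℝ ⊤ μ, X ≤ Y → Y ∈ A) (hclosed : IsClosed A)
    (hcone : ∀ Z ∈ A, ∀ c : ℝ, 0 < c → c • Z ∈ A)
    (S0 : ℝ) (hS0 : 0 < S0) (ST : Lp ℝ ⊤ μ) (hSA : ST ∈ A) (hST : 0 ≤ ST) :
    (∀ X0 : ℝ, 0 < X0 → ∀ XT : Lp ℝ ⊤ μ, XT ∉ A → IR A S0 X0 ST XT < 1) ↔
      ST ∈ interior A := by
  constructor
  · -- forward direction: contrapositive
    intro h
    by_contra hint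
    -- ST not in interior : every ball meets the complement
    have hball : ∀ ε : ℝ, 0 < ε → ∃ Z, Z ∉ A ∧ ‖Z - ST‖ < ε := by
      intro ε hε
      by_contra hcon
      push_neg at hcon
      apply hint
      rw [mem_interior_iff_mem_nhds, Metric.mem_nhds_iff]
      refine ⟨ε, hε, fun Z hZ => ?_⟩
      by_contra hZA
      exact absurd (hcon Z hZA) (not_le.mpr (by simpa [dist_eq_norm] using hZ))
    set one : Lp ℝ ⊤ μ := Lp.const ⊤ μ (1 : ℝ) with hone
    -- ST - c • one is never acceptable for c > 0
    have hnc : ∀ c : ℝ, 0 < c → ST - c • one ∉ A := by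
      intro c hc hmem
      obtain ⟨Z, hZA, hZd⟩ := hball c hc
      refine hZA (hmono _ hmem Z ?_)
      rw [← Lp.coeFn_le]
      have h1 := Lp.coeFn_sub ST (c • one)
      have h2 := Lp.coeFn_smul c one
      have h3 := Lp.coeFn_const ⊤ μ (1 : ℝ)
      have h4 := Lp.coeFn_sub Z ST
      have h5 := ae_norm_le_norm_Linfty (Z - ST)
      filter_upwards [h1, h2, h3, h4, h5] with x e1 e2 e3 e4 e5
      have : ‖Z x - ST x‖ ≤ ‖Z - ST‖ := by rw [e4] at e5; exact e5
      have hb : ST x - c ≤ Z x := by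
        have := (abs_le.mp (le_of_lt (lt_of_le_of_lt this hZd))).1
        linarith
      calc (ST - c • one) x = ST x - (c • one) x := e1
        _ = ST x - c • (one x) := by rw [e2]; rfl
        _ = ST x - c * 1 := by rw [e3]; rfl
        _ ≤ Z x := by simpa using hb
    -- the bad position
    set XT : Lp ℝ ⊤ μ := ST - one with hXTdef
    have hXT : XT ∉ A := by simpa using hnc 1 one_pos
    have hlt := h S0 hS0 XT hXT
    -- but IR = 1 for this position
    have hpos : ∀ l : ℝ, (1 - l) • XT + l • ((S0 / S0) • ST) = ST - (1 - l) • one := by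
      intro l
      rw [div_self (ne_of_gt hS0), one_smul, hXTdef]
      module
    have h1mem : (1 : ℝ) ∈ IRset A S0 S0 ST XT := by
      refine ⟨⟨zero_le_one, le_refl 1⟩, ?_⟩
      rw [hpos]
      simpa using hSA
    have hIR : (1 : ℝ) ≤ IR A S0 S0 ST XT := by
      apply le_csInf ⟨1, h1mem⟩
      rintro b ⟨⟨hb0, hb1⟩, hbA⟩
      by_contra hblt
      push_neg at hblt
      rw [hpos] at hbA
      exact hnc (1 - b) (by linarith) hbA
    linarith
  · -- reverse direction
    intro h X0 hX0 XT hXT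
    obtain ⟨ε, hε, hballsub⟩ := Metric.mem_nhds_iff.mp (mem_interior_iff_mem_nhds.mp h)
    have h0A : (0 : Lp ℝ ⊤ μ) ∈ A := zero_mem_closed_cone hne hclosed hcone
    have hXTne : XT ≠ 0 := fun hh => hXT (hh ▸ h0A)
    have hN : 0 < ‖XT‖ := norm_pos_iff.mpr hXTne
    set k : ℝ := X0 / S0 with hk
    have hkpos : 0 < k := div_pos hX0 hS0
    set l : ℝ := ‖XT‖ / (‖XT‖ + k * ε / 2) with hl
    have hden : 0 < ‖XT‖ + k * ε / 2 := by positivity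
    have hl0 : 0 < l := div_pos hN hden
    have hl1 : l < 1 := (div_lt_one hden).mpr (by nlinarith)
    set c : ℝ := (1 - l) / (l * k) with hc
    have hcpos : 0 < c := div_pos (by linarith) (by positivity)
    have hkey : (l * k) * c = 1 - l := by
      rw [hc]; field_simp
    have heq : (1 - l) • XT + l • (k • ST) = (l * k) • (ST + c • XT) := by
      rw [smul_add, smul_smul, smul_smul, hkey]
      module
    have hdist : ST + c • XT ∈ Metric.ball ST ε := by
      rw [Metric.mem_ball, dist_eq_norm]
      have : ‖ST + c • XT - ST‖ = c * ‖XT‖ := by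
        rw [add_sub_cancel_left, norm_smul, Real.norm_eq_abs, abs_of_pos hcpos]
      rw [this]
      have hcval : c * ‖XT‖ = ε / 2 := by
        rw [hc, hl]; field_simp; ring
      rw [hcval]; linarith
    have hmemA : (1 - l) • XT + l • (k • ST) ∈ A := by
      rw [heq]
      exact hcone _ (hballsub hdist) _ (by positivity)
    have hlmem : l ∈ IRset A S0 X0 ST XT := ⟨⟨le_of_lt hl0, le_of_lt hl1⟩, hmemA⟩
    have hbdd : BddBelow (IRset A S0 X0 ST XT) := ⟨0, fun x hx => hx.1.1⟩
    exact lt_of_le_of_lt (csInf_le hbdd hlmem) hl1
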